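/- Let s > 0 and let P satisfy H1 and H2. If γ is a positive solution of the Dyson–Schwinger ODE on the whole interval [x₀, ∞) for some x₀ > 0, then γ(x) > γ_c(x) for every x ≥ x₀; that is, every global positive solution stays strictly above the nullcline. -/

import Mathlib

open Real MeasureTheory Filter Set

noncomputable section

/-- `γ` is a positive solution of the Dyson–Schwinger ODE
`γ'(x) = (γ(x) + γ(x)² − P(x)) / (s·x·γ(x))` on the set `I`. -/
def IsDSSolution (s : ℝ) (P γ : ℝ → ℝ) (I : Set ℝ) : Prop :=
  (∀ x ∈ I, 0 < γ x) ∧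
    ∀ x ∈ I, HasDerivWithinAt γ ((γ x + (γ x) ^ 2 - P x) / (s * x * γ x)) I x

/-- Hypothesis H1: `P` is twice continuously differentiable on `[0,∞)`,
`P 0 = 0`, and `P x > 0` for `x > 0`. -/
def H1 (P : ℝ → ℝ) : Prop :=
  ContDiffOn ℝ 2 P (Set.Ici 0) ∧ P 0 = 0 ∧ ∀ x > (0 : ℝ), 0 < P x

/-- Hypothesis H2: `P` is strictly increasing on `[0,∞)`. -/
def H2 (P : ℝ → ℝ) : Prop := StrictMonoOn P (Set.Ici 0)

/-- The nullcline `γ_c(x) = (√(1 + 4 P x) − 1)/2`. -/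
def gammaC (P : ℝ → ℝ) (x : ℝ) : ℝ := (Real.sqrt (1 + 4 * P x) - 1) / 2

/-!
Write `w = γ + γ² - P`, so that `γ_c < γ` is `w > 0` and `s x γ γ' = w`. Differentiating,
`w' = (1 + 2γ) w / (s x γ) - P' ≤ L w` wherever `w ≥ 0`, since `P' ≥ 0`; a Grönwall barrier
argument shows that once `w ≤ 0` at some point, `w ≤ 0` from then on. Then `γ` is nonincreasing,
so `w ≤ -δ < 0` further along, and `(γ²/2)' = w / (s x) ≤ -δ / (s x)` forces `γ²` to decrease
like `-log x`, which is impossible.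
-/

theorem nonpos_of_hasDerivWithinAt_le_mul {f f' : ℝ → ℝ} {a b L : ℝ}
    (hf : ContinuousOn f (Icc a b)) (hf' : ∀ x ∈ Ico a b, HasDerivWithinAt f (f' x) (Ici x) x)
    (bound : ∀ x ∈ Ico a b, 0 ≤ f x → f' x ≤ L * f x) (ha : f a ≤ 0) :
    ∀ x ∈ Icc a b, f x ≤ 0 := by
  intro x hx
  set K := |L| + 1
  -- the barrier `ε e^{K (y - a)}` grows strictly faster than any `f` with `f' ≤ L f` touching it
  have barrier : ∀ ε > 0, f x ≤ ε * exp (K * (x - a)) := by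
    intro ε hε
    refine image_le_of_deriv_right_lt_deriv_boundary hf hf' (ha.trans (by positivity))
      (fun y => ((((hasDerivAt_id y).sub_const a).const_mul K).exp).const_mul ε) ?_ hx
    intro y hy hfy
    have hB : 0 < ε * exp (K * (y - a)) := by positivity
    calc f' y ≤ L * f y := bound y hy (hfy ▸ hB.le)
      _ ≤ |L| * f y := mul_le_mul_of_nonneg_right (le_abs_self L) (hfy ▸ hB.le)
      _ < ε * (exp (K * (id y - a)) * (K * 1)) := by
        rw [hfy, id]; nlinarith [abs_nonneg L]
  have hE : 0 < exp (K * (x - a)) := exp_pos _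
  refine le_of_forall_pos_le_add fun ε hε => ?_
  simpa [div_mul_cancel₀ ε hE.ne'] using barrier (ε / exp (K * (x - a))) (by positivity)

theorem false_of_mul_deriv_le_neg_div {g g' : ℝ → ℝ} {a c : ℝ} (ha : 0 < a) (hc : 0 < c)
    (hg : ∀ x ∈ Ici a, HasDerivWithinAt g (g' x) (Ici a) x)
    (bound : ∀ x ∈ Ioi a, g x * g' x ≤ -c / x) : False := by
  set v : ℝ → ℝ := fun x => g x ^ 2 / 2 + c * log x
  have hv : AntitoneOn v (Ici a) := by
    refine antitoneOn_of_hasDerivWithinAt_nonpos (convex_Ici a) (f' := fun x => g x * g' x + c / x)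
      ?_ ?_ ?_
    · have hgc : ContinuousOn g (Ici a) := fun x hx => (hg x hx).continuousWithinAt
      have hlog : ContinuousOn log (Ici a) :=
        continuousOn_log.mono fun x hx => (ha.trans_le hx).ne'
      fun_prop
    · intro x hx
      rw [interior_Ici] at hx ⊢
      have hx0 : x ≠ 0 := (ha.trans hx).ne'
      refine (((((hg x (mem_Ici_of_Ioi hx)).mono Ioi_subset_Ici_self).pow 2).div_const 2).add
        ((hasDerivAt_log hx0).const_mul c).hasDerivWithinAt).congr_deriv ?_
      field_simp
      ring
    · intro x hx
      rw [interior_Ici] at hx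
      linarith [bound x hx, neg_div x c]
  obtain ⟨x, hx, hxa⟩ := (((tendsto_log_atTop.const_mul_atTop hc).eventually_gt_atTop (v a)).and
    (eventually_ge_atTop a)).exists
  have : g x ^ 2 / 2 + c * log x ≤ v a := hv self_mem_Ici hxa hxa
  nlinarith [sq_nonneg (g x)]

theorem gammaC_lt_of_lt_add_sq {P : ℝ → ℝ} {x g : ℝ} (hg : 0 ≤ g) (h : P x < g + g ^ 2) :
    gammaC P x < g := by
  have : √(1 + 4 * P x) < 2 * g + 1 := by
    rw [sqrt_lt' (by positivity)]
    linarith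
  unfold gammaC
  linarith

theorem H1.hasDerivAt {P : ℝ → ℝ} (hP : H1 P) {x : ℝ} (hx : 0 < x) :
    HasDerivAt P (deriv P x) x :=
  ((hP.1.differentiableOn two_ne_zero).differentiableAt (Ici_mem_nhds hx)).hasDerivAt

theorem H2.deriv_nonneg {P : ℝ → ℝ} (hP : H2 P) {x : ℝ} (hx : 0 < x) : 0 ≤ deriv P x := by
  rw [← derivWithin_of_mem_nhds (Ici_mem_nhds hx)]
  exact hP.monotoneOn.derivWithin_nonneg

namespace IsDSSolution

variable {s a : ℝ} {P γ : ℝ → ℝ}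

theorem mono {I J : Set ℝ} (h : IsDSSolution s P γ I) (hJ : J ⊆ I) : IsDSSolution s P γ J :=
  ⟨fun x hx => h.1 x (hJ hx), fun x hx => (h.2 x (hJ hx)).mono hJ⟩

theorem continuousOn {I : Set ℝ} (h : IsDSSolution s P γ I) : ContinuousOn γ I :=
  fun x hx => (h.2 x hx).continuousWithinAt

theorem add_sq_le_of_le (hs : 0 < s) (hP1 : H1 P) (hP2 : H2 P) (ha : 0 < a)
    (hγ : IsDSSolution s P γ (Ici a)) (h : γ a + γ a ^ 2 ≤ P a) {b : ℝ} (hb : a ≤ b) :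
    γ b + γ b ^ 2 ≤ P b := by
  set w : ℝ → ℝ := fun x => γ x + γ x ^ 2 - P x
  set k : ℝ → ℝ := fun x => (1 + 2 * γ x) / (s * x * γ x)
  have hγc : ContinuousOn γ (Icc a b) := hγ.continuousOn.mono Icc_subset_Ici_self
  have hPc : ContinuousOn P (Icc a b) := hP1.1.continuousOn.mono fun x hx => ha.le.trans hx.1
  have hwc : ContinuousOn w (Icc a b) := by fun_prop
  have hkc : ContinuousOn k (Icc a b) := by
    refine ContinuousOn.div (by fun_prop) (by fun_prop) fun x hx => ?_
    have := hγ.1 x hx.1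
    have := ha.trans_le hx.1
    positivity
  obtain ⟨L, hL⟩ := isCompact_Icc.bddAbove_image hkc
  have hw' : ∀ x ∈ Ico a b, HasDerivWithinAt w (k x * w x - deriv P x) (Ici x) x := by
    intro x hx
    have hγx := (hγ.2 x hx.1).mono (Ici_subset_Ici.2 hx.1)
    refine ((hγx.add (hγx.pow 2)).sub
      (hP1.hasDerivAt (ha.trans_le hx.1)).hasDerivWithinAt).congr_deriv ?_
    simp only [k, w]
    ring
  refine sub_nonpos.1 <| nonpos_of_hasDerivWithinAt_le_mul (L := L) hwc hw' (fun x hx hwx => ?_)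
    (by simpa [w] using h) b ⟨hb, le_rfl⟩
  have hkL : k x ≤ L := hL ⟨x, Ico_subset_Icc_self hx, rfl⟩
  nlinarith [hP2.deriv_nonneg (ha.trans_le hx.1)]

theorem antitoneOn (hs : 0 < s) (ha : 0 < a) (hγ : IsDSSolution s P γ (Ici a))
    (h : ∀ x ≥ a, γ x + γ x ^ 2 ≤ P x) : AntitoneOn γ (Ici a) := by
  refine antitoneOn_of_hasDerivWithinAt_nonpos (convex_Ici a) hγ.continuousOn
    (fun x hx => (hγ.2 x (interior_subset hx)).mono interior_subset) fun x hx => ?_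
  rw [interior_Ici] at hx
  have hx0 : 0 < x := ha.trans hx
  have hγx : 0 < γ x := hγ.1 x (mem_Ici_of_Ioi hx)
  exact div_nonpos_of_nonpos_of_nonneg (by linarith [h x (le_of_lt hx)]) (by positivity)

theorem lt_add_sq (hs : 0 < s) (hP1 : H1 P) (hP2 : H2 P) (ha : 0 < a)
    (hγ : IsDSSolution s P γ (Ici a)) : P a < γ a + γ a ^ 2 := by
  by_contra! h
  have hw : ∀ x ≥ a, γ x + γ x ^ 2 ≤ P x := fun x hx => hγ.add_sq_le_of_le hs hP1 hP2 ha h hx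
  have hanti := hγ.antitoneOn hs ha hw
  set δ := P (a + 1) - P a
  have hδ : 0 < δ := sub_pos.2 (hP2 ha.le (mem_Ici.2 (by linarith)) (by linarith))
  have hγ' := hγ.mono (Ici_subset_Ici.2 (by linarith : a ≤ a + 1))
  refine false_of_mul_deriv_le_neg_div (by linarith) (div_pos hδ hs) hγ'.2 fun x hx => ?_
  have hxa : a ≤ x := by linarith [mem_Ioi.1 hx]
  have hx0 : 0 < x := ha.trans_le hxa
  have hγx : 0 < γ x := hγ.1 x hxa
  have hle : γ x ≤ γ a := hanti self_mem_Ici hxa hxa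
  have hPx : P (a + 1) ≤ P x := hP2.monotoneOn (mem_Ici.2 (by linarith)) hx0.le (le_of_lt hx)
  have hw' : γ x + γ x ^ 2 - P x ≤ -δ := by nlinarith [hw a le_rfl]
  calc γ x * ((γ x + γ x ^ 2 - P x) / (s * x * γ x)) = (γ x + γ x ^ 2 - P x) / (s * x) := by
        field_simp
    _ ≤ -δ / (s * x) := div_le_div_of_nonneg_right hw' (by positivity)
    _ = -(δ / s) / x := by field_simp

end IsDSSolution

theorem stmt_11 (s : ℝ) (hs : 0 < s) (P : ℝ → ℝ) (hP1 : H1 P) (hP2 : H2 P)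
    (x₀ : ℝ) (hx₀ : 0 < x₀) (γ : ℝ → ℝ)
    (hγ : IsDSSolution s P γ (Set.Ici x₀)) :
    ∀ x ≥ x₀, gammaC P x < γ x := by
  intro x hx
  have hγx := hγ.mono (Ici_subset_Ici.2 hx)
  exact gammaC_lt_of_lt_add_sq (hγx.1 x self_mem_Ici).le (hγx.lt_add_sq hs hP1 hP2 (hx₀.trans_le hx))
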